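/- The diagonal Gram entries: for the a non-intersecting walk model, A_{nn} = C_n(a,b,c)^{-1} where C_n(a,b,c) = (a+b−1)!(a+c−1)!(2a+b+c−2n−1)·(a!)² / (n!(2a+b+c−n−1)!), and consequently det A = ∏_{n=0}^{a−1} n!(2a+b+c−n−1)! / ((a+b−1)!(a+c−1)!(2a+b+c−2n−1)(a!)²). -/

import Mathlib

open Finset

/-- The Pochhammer symbol `(a)_n = a(a+1)⋯(a+n-1)` for a real argument. -/
noncomputable def poch (a : ℝ) (n : ℕ) : ℝ := ∏ i ∈ Finset.range n, (a + i)

/-- `1/k!` for an integer `k`, with the convention `1/k! = 0` for `k < 0`. -/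
noncomputable def invfact (k : ℤ) : ℝ :=
  if 0 ≤ k then ((Nat.factorial k.toNat : ℕ) : ℝ)⁻¹ else 0

/-- The single step transition kernel `φ(x,y) = δ_{x-1,y} + δ_{x+1,y}`. -/
noncomputable def walkStep (x y : ℤ) : ℝ :=
  (if x - 1 = y then 1 else 0) + (if x + 1 = y then 1 else 0)

/-- The `n`-fold convolution `φ^{*n}` of the step kernel, with `φ^{*0} = δ`. -/
noncomputable def walkConv : ℕ → ℤ → ℤ → ℝ
  | 0 => fun x y => if x = y then 1 else 0
  | n + 1 => fun x y => ∑' z : ℤ, walkConv n x z * walkStep z y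

/-- The function `ψ(n,z)` of (3.18). -/
noncomputable def psiFun (a b c n : ℕ) (z : ℤ) : ℝ :=
  if Odd z then
    ∑ j ∈ Finset.range (n + 1),
      (n.choose j : ℝ) * poch ((n : ℝ) - 2 * a - b - c + 1) j /
          (poch (-(a : ℝ) - c + 1) j * poch (-(a : ℝ)) j) *
        invfact ((z + 1) / 2 - j) * invfact ((a : ℤ) - (z + 1) / 2)
  else 0

/-- The function `ψ*(n,w)` of (3.19), so that `ψ*(n, c-b+z)` is given by the
same sum with `b` and `c` interchanged. -/
noncomputable def psiStarFun (a b c n : ℕ) (w : ℤ) : ℝ :=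
  psiFun a c b n (w - ((c : ℤ) - b))

/-- The Gram matrix `A_{nm} = ∑_{z,w} ψ(n,z) φ^{*(b+c-2)}(z,w) ψ*(m,w)`. -/
noncomputable def gramA (a b c : ℕ) : Matrix (Fin a) (Fin a) ℝ :=
  Matrix.of fun n m : Fin a =>
    ∑' z : ℤ, ∑' w : ℤ,
      psiFun a b c n z * walkConv (b + c - 2) z w * psiStarFun a b c m w

/-- The constant `C_n(a,b,c)` of (3.27). -/
noncomputable def hahnC (a b c n : ℕ) : ℝ :=
  ((Nat.factorial (a + b - 1) : ℝ) * (Nat.factorial (a + c - 1) : ℝ) *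
      ((2 * a + b + c - 2 * n - 1 : ℕ) : ℝ) * ((Nat.factorial a : ℝ)) ^ 2) /
    ((Nat.factorial n : ℝ) * (Nat.factorial (2 * a + b + c - n - 1) : ℝ))

/-!
Only `z = 2s - 1` and `w = c - b - 1 + 2t` with `0 ≤ s, t ≤ a` contribute to `A_{nm}`. There
`ψ(n, ·)` and `ψ*(m, ·)` are combinations of binomials `C(a - j, s - j)` and `C(a - i, t - i)`,
and `φ^{*(b+c-2)}` is the binomial `C(b + c - 2, c - 1 + t - s)`, so two Vandermonde
convolutions evaluate the double sum: with `N = 2a + b + c - 1` and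
`h_n(j) = (-1)^j C(n, j) (N - n)(N - n - 1)⋯(N - n - j + 1)`,
`A_{nm} = ∑_{j, i} h_n(j) h_m(i) (N - 1 - i - j)! / ((a!)² (a + b - 1)! (a + c - 1)!)`.
By Chu–Vandermonde the sum over `j` is `(N - 1 - i - n)!` times the falling factorial
`(n - 1 - i)(n - 2 - i)⋯(-i)`, which vanishes for `i < n` and is `(-1)^n n!` for `i = n`.
Hence `A_{nm} = 0` for `m < n` (and by symmetry for `m ≠ n`), `A_{nn} = C_n(a,b,c)⁻¹`, and
`det A` is the product of the diagonal entries.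
-/

open Nat

-- Chu–Vandermonde: the left side is `K! · ₂F₁(-n, -x; -K; 1)`.
theorem alternating_sum_choose_mul_descPochhammer_mul_factorial {R : Type*} [CommRing R]
    (x : R) {n K : ℕ} (h : n ≤ K) :
    ∑ j ∈ range (n + 1),
        (-1) ^ j * (n.choose j : R) * (descPochhammer R j).eval x * ((K - j)! : R)
      = ((K - n)! : R) * (descPochhammer R n).eval ((K : R) - x) := by
  induction n generalizing x K with
  | zero => simp
  | succ n ih =>
    obtain ⟨K, rfl⟩ : ∃ K', K = K' + 1 := ⟨K - 1, by omega⟩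
    have hsplit := Finset.sum_choose_succ_mul
      (fun j _ => (-1) ^ j * (descPochhammer R j).eval x * ((K + 1 - j)! : R)) n
    simp only [← mul_assoc, mul_comm _ ((-1 : R) ^ _)] at hsplit
    rw [hsplit, ih x (by omega)]
    have hshift : ∀ j ∈ range (n + 1),
        (-1) ^ (j + 1) * (n.choose j : R) * (descPochhammer R (j + 1)).eval x
            * ((K + 1 - (j + 1))! : R)
          = -x * ((-1) ^ j * (n.choose j : R) * (descPochhammer R j).eval (x - 1)
            * ((K - j)! : R)) := by
      intro j _
      rw [descPochhammer_succ_left, Polynomial.eval_mul, Polynomial.eval_X, Polynomial.eval_comp,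
        Polynomial.eval_sub, Polynomial.eval_X, Polynomial.eval_one, Nat.add_sub_add_right]
      ring
    rw [sum_congr rfl hshift, ← mul_sum, ih (x - 1) (by omega), sub_sub_eq_add_sub,
      descPochhammer_succ_eval, show K + 1 - n = (K - n) + 1 by omega, Nat.factorial_succ,
      Nat.add_sub_add_right]
    push_cast [Nat.cast_sub (show n ≤ K by omega)]
    ring

theorem descPochhammer_eval_neg_one {R : Type*} [CommRing R] (n : ℕ) :
    (descPochhammer R n).eval (-1) = (-1) ^ n * (n ! : R) := by
  have h := ascPochhammer_eval_neg_eq_descPochhammer R (-1) n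
  rw [neg_neg, ascPochhammer_eval_one] at h
  rw [h, ← mul_assoc, ← mul_pow, neg_one_mul, neg_neg, one_pow, one_mul]

theorem descPochhammer_eval_sub_one_sub_of_lt {R : Type*} [CommRing R] {n i : ℕ} (h : i < n) :
    (descPochhammer R n).eval ((n : R) - 1 - i) = 0 := by
  rw [show (n : R) - 1 - i = (n - 1 - i : ℕ) by
    rw [Nat.sub_sub, Nat.cast_sub (by omega)]; push_cast; ring]
  exact descPochhammer_eval_coe_nat_of_lt (by omega)

noncomputable def hahnCoeff (N n j : ℕ) : ℝ := (-1) ^ j * n.choose j * (N - n).descFactorial j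

noncomputable def hahnGram (N n m : ℕ) : ℝ :=
  ∑ j ∈ range (n + 1), ∑ i ∈ range (m + 1),
    hahnCoeff N n j * hahnCoeff N m i * ((N - 1 - i - j)! : ℝ)

theorem sum_hahnCoeff_mul_factorial {N n i : ℕ} (h : n + i < N) :
    ∑ j ∈ range (n + 1), hahnCoeff N n j * ((N - 1 - i - j)! : ℝ)
      = ((N - 1 - i - n)! : ℝ) * (descPochhammer ℝ n).eval ((n : ℝ) - 1 - i) := by
  have key := alternating_sum_choose_mul_descPochhammer_mul_factorial ((N - n : ℕ) : ℝ)
    (show n ≤ N - 1 - i by omega)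
  simp only [descPochhammer_eval_eq_descFactorial] at key
  rw [show ((N - 1 - i : ℕ) : ℝ) - (N - n : ℕ) = n - 1 - i by
    rw [Nat.sub_sub, Nat.cast_sub (by omega), Nat.cast_sub (by omega)]; push_cast; ring] at key
  rw [← key]
  exact sum_congr rfl fun j _ => by rw [hahnCoeff]

theorem hahnGram_comm (N n m : ℕ) : hahnGram N n m = hahnGram N m n := by
  rw [hahnGram, hahnGram, sum_comm]
  refine sum_congr rfl fun i _ => sum_congr rfl fun j _ => ?_
  rw [Nat.sub_right_comm (N - 1) i j, mul_comm (hahnCoeff N n j)]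

theorem hahnGram_eq_sum {N n m : ℕ} (hN : n + m < N) :
    hahnGram N n m = ∑ i ∈ range (m + 1), hahnCoeff N m i * ((N - 1 - i - n)! : ℝ)
      * (descPochhammer ℝ n).eval ((n : ℝ) - 1 - i) := by
  rw [hahnGram, sum_comm]
  refine sum_congr rfl fun i hi => ?_
  rw [mul_assoc, ← sum_hahnCoeff_mul_factorial (by simp at hi; omega), mul_sum]
  exact sum_congr rfl fun j _ => by ring

theorem hahnGram_eq_zero_of_lt {N n m : ℕ} (h : m < n) (hN : n + m < N) : hahnGram N n m = 0 := by
  rw [hahnGram_eq_sum hN]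
  exact sum_eq_zero fun i hi => by
    rw [descPochhammer_eval_sub_one_sub_of_lt (by simp at hi; omega), mul_zero]

theorem hahnGram_eq_zero_of_ne {N n m : ℕ} (h : n ≠ m) (hN : n + m < N) : hahnGram N n m = 0 := by
  rcases h.lt_or_gt with h | h
  · rw [hahnGram_comm]
    exact hahnGram_eq_zero_of_lt h (by omega)
  · exact hahnGram_eq_zero_of_lt h hN

theorem hahnGram_self {N n : ℕ} (hN : 2 * n < N) :
    hahnGram N n n = n ! * (N - n)! / (N - 2 * n : ℕ) := by
  rw [hahnGram_eq_sum (by omega), sum_range_succ, sum_eq_zero fun i hi => ?_, zero_add]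
  · have hfact : (N - n).descFactorial n * (N - 1 - n - n)! * (N - 2 * n) = (N - n)! := by
      rw [← Nat.factorial_mul_descFactorial (show n ≤ N - n by omega),
        show N - n - n = (N - 1 - n - n) + 1 by omega, Nat.factorial_succ,
        show N - 2 * n = (N - 1 - n - n) + 1 by omega]
      ring
    have hne : ((N - 2 * n : ℕ) : ℝ) ≠ 0 := Nat.cast_ne_zero.mpr (by omega)
    have hsq : ((-1 : ℝ) ^ n) ^ 2 = 1 := by
      rw [← pow_mul, mul_comm, pow_mul, neg_one_sq, one_pow]
    rw [show (n : ℝ) - 1 - n = -1 by ring, descPochhammer_eval_neg_one, hahnCoeff,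
      Nat.choose_self, eq_div_iff hne, ← hfact]
    push_cast
    linear_combination
      ((N - n).descFactorial n * (N - 1 - n - n)! * n ! * (N - 2 * n : ℕ) : ℝ) * hsq
  · rw [descPochhammer_eval_sub_one_sub_of_lt (by simpa using hi), mul_zero]

noncomputable def intChoose (p : ℕ) (k : ℤ) : ℝ :=
  if 0 ≤ k then (p.choose k.toNat : ℝ) else 0

theorem intChoose_natCast (p k : ℕ) : intChoose p k = p.choose k := by
  simp [intChoose]

theorem intChoose_of_neg {p : ℕ} {k : ℤ} (h : k < 0) : intChoose p k = 0 := by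
  simp [intChoose, not_le.mpr h]

theorem intChoose_of_lt {p : ℕ} {k : ℤ} (h : (p : ℤ) < k) : intChoose p k = 0 := by
  lift k to ℕ using by omega
  rw [intChoose_natCast, Nat.choose_eq_zero_of_lt (by omega), Nat.cast_zero]

theorem intChoose_zero_left (k : ℤ) : intChoose 0 k = if k = 0 then 1 else 0 := by
  rcases lt_trichotomy k 0 with h | rfl | h
  · rw [intChoose_of_neg h, if_neg h.ne]
  · simp [intChoose]
  · rw [intChoose_of_lt (by simpa using h), if_neg h.ne']

theorem intChoose_succ_left (p : ℕ) (k : ℤ) :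
    intChoose (p + 1) k = intChoose p (k - 1) + intChoose p k := by
  rcases lt_trichotomy k 0 with h | rfl | h
  · rw [intChoose_of_neg h, intChoose_of_neg h, intChoose_of_neg (by omega), add_zero]
  · rw [intChoose_of_neg (show (0 : ℤ) - 1 < 0 by norm_num)]
    simp [intChoose]
  · lift k to ℕ using h.le
    obtain ⟨k, rfl⟩ : ∃ k', k = k' + 1 := ⟨k - 1, by omega⟩
    push_cast
    rw [add_sub_cancel_right, ← Nat.cast_succ, intChoose_natCast, intChoose_natCast,
      intChoose_natCast, Nat.choose_succ_succ, Nat.cast_add]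

theorem intChoose_symm (p : ℕ) (k : ℤ) : intChoose p k = intChoose p (p - k) := by
  rcases lt_or_ge k 0 with h | h
  · rw [intChoose_of_neg h, intChoose_of_lt (by omega)]
  rcases lt_or_ge (p : ℤ) k with h' | h'
  · rw [intChoose_of_lt h', intChoose_of_neg (by omega)]
  lift k to ℕ using h
  rw [← Nat.cast_sub (by omega), intChoose_natCast, intChoose_natCast, Nat.choose_symm (by omega)]

theorem sum_intChoose_mul_intChoose (p q : ℕ) (v : ℤ) {i R : ℕ} (h : i + q < R) :
    ∑ t ∈ range R, intChoose p (v - t) * intChoose q (t - i) = intChoose (p + q) (v - i) := by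
  induction q generalizing i with
  | zero =>
    simp only [intChoose_zero_left, sub_eq_zero, Nat.cast_inj, mul_ite, mul_one, mul_zero,
      sum_ite_eq', mem_range, add_zero]
    rw [if_pos (by omega)]
  | succ q ih =>
    simp only [intChoose_succ_left q, mul_add, sum_add_distrib, sub_sub, ← Nat.cast_succ,
      ih (show i + 1 + q < R by omega), ih (show i + q < R by omega), ← add_assoc]
    rw [intChoose_succ_left, Nat.cast_succ, sub_sub]

theorem sum_sum_intChoose_mul_intChoose_mul_intChoose (p : ℕ) (u : ℤ) {a i j : ℕ}
    (hi : i ≤ a) (hj : j ≤ a) :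
    ∑ s ∈ range (a + 1), ∑ t ∈ range (a + 1),
        intChoose (a - j) (s - j) * intChoose p (u + t - s) * intChoose (a - i) (t - i)
      = intChoose (p + (a - i) + (a - j)) (u + a - j) := by
  have inner : ∀ s : ℕ,
      ∑ t ∈ range (a + 1), intChoose p (u + t - s) * intChoose (a - i) (t - i)
      = intChoose (p + (a - i)) (u + a - s) := by
    intro s
    have hflip : ∀ t : ℕ, intChoose p (u + t - s) = intChoose p (p - u + s - t) := fun t => by
      rw [intChoose_symm]; ring_nf
    simp only [hflip]
    rw [sum_intChoose_mul_intChoose p (a - i) _ (by omega), intChoose_symm]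
    congr 1
    push_cast [Nat.cast_sub hi]
    ring
  simp only [mul_assoc, ← mul_sum, inner]
  rw [← sum_intChoose_mul_intChoose (p + (a - i)) (a - j) (u + a)
    (show j + (a - j) < a + 1 by omega)]
  exact sum_congr rfl fun s _ => mul_comm _ _

theorem tsum_mul_walkStep (f : ℤ → ℝ) (y : ℤ) :
    ∑' z, f z * walkStep z y = f (y + 1) + f (y - 1) := by
  rw [tsum_eq_sum (s := {y + 1, y - 1}) fun z hz => ?_, sum_pair (by omega)]
  · simp [walkStep, show y + 1 + 1 ≠ y by omega, show y - 1 - 1 ≠ y by omega]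
  · simp only [mem_insert, mem_singleton, not_or] at hz
    simp [walkStep, show z - 1 ≠ y by omega, show z + 1 ≠ y by omega]

theorem walkConv_eq (m : ℕ) (x y : ℤ) :
    walkConv m x y = if 2 ∣ y - x + m then intChoose m ((y - x + m) / 2) else 0 := by
  induction m generalizing y with
  | zero =>
    simp only [walkConv, Nat.cast_zero, add_zero, intChoose_zero_left]
    by_cases h : x = y
    · simp [h]
    · have : ¬ (2 ∣ y - x ∧ (y - x) / 2 = 0) := by omega
      split_ifs <;> simp_all
  | succ m ih =>
    rw [show walkConv (m + 1) x y = _ from tsum_mul_walkStep (walkConv m x) y, ih, ih]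
    by_cases h : 2 ∣ y - x + (m + 1 : ℕ)
    · rw [if_pos (by push_cast at h ⊢; omega), if_pos (by push_cast at h ⊢; omega), if_pos h,
        intChoose_succ_left, add_comm]
      congr 2 <;> push_cast <;> omega
    · rw [if_neg (by push_cast at h ⊢; omega), if_neg (by push_cast at h ⊢; omega), if_neg h,
        add_zero]

theorem walkConv_neg_one_add_two_mul {b c : ℕ} (hbc : 2 ≤ b + c) (s t : ℕ) :
    walkConv (b + c - 2) (-1 + 2 * s) ((c : ℤ) - b - 1 + 2 * t)
      = intChoose (b + c - 2) ((c : ℤ) - 1 + t - s) := by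
  rw [walkConv_eq, if_pos ⟨(c : ℤ) - 1 + t - s, by omega⟩]
  congr 1
  omega

theorem poch_neg_natCast (K j : ℕ) : poch (-(K : ℝ)) j = (-1) ^ j * K.descFactorial j := by
  rw [poch, ← descPochhammer_eval_eq_descFactorial ℝ, descPochhammer_eval_eq_prod_range]
  calc ∏ i ∈ range j, (-(K : ℝ) + i) = ∏ i ∈ range j, (-1) * ((K : ℝ) - i) :=
        prod_congr rfl fun _ _ => by ring
    _ = _ := by rw [prod_mul_distrib, prod_const, card_range]

theorem invfact_of_neg {k : ℤ} (h : k < 0) : invfact k = 0 := by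
  simp [invfact, not_le.mpr h]

theorem invfact_natCast (k : ℕ) : invfact k = (k ! : ℝ)⁻¹ := by
  simp [invfact]

theorem invfact_sub_mul_invfact_sub {a j s : ℕ} (hs : s ≤ a) :
    invfact ((s : ℤ) - j) * invfact ((a : ℤ) - s)
      = intChoose (a - j) ((s : ℤ) - j) / (a - j)! := by
  rcases lt_or_ge s j with h | h
  · rw [invfact_of_neg (by omega), intChoose_of_neg (by omega), zero_mul, zero_div]
  have hfact := Nat.choose_mul_factorial_mul_factorial (show s - j ≤ a - j by omega)
  rw [show a - j - (s - j) = a - s by omega] at hfact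
  rw [← Nat.cast_sub h, ← Nat.cast_sub hs, invfact_natCast, invfact_natCast, intChoose_natCast,
    eq_div_iff (by positivity), ← hfact]
  push_cast
  field_simp

theorem psiCoeff_div_factorial {a n j : ℕ} (b c : ℕ) (hn : n < a) (hj : j ≤ n) :
    (n.choose j : ℝ) * poch ((n : ℝ) - 2 * a - b - c + 1) j /
        (poch (-(a : ℝ) - c + 1) j * poch (-(a : ℝ)) j) / (a - j)!
      = hahnCoeff (2 * a + b + c - 1) n j * (a + c - 1 - j)! / (a ! * (a + c - 1)!) := by
  rw [show (n : ℝ) - 2 * a - b - c + 1 = -((2 * a + b + c - 1 - n : ℕ) : ℝ) by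
      rw [Nat.sub_sub, Nat.cast_sub (by omega)]; push_cast; ring,
    show -(a : ℝ) - c + 1 = -((a + c - 1 : ℕ) : ℝ) by
      rw [Nat.cast_sub (by omega)]; push_cast; ring,
    poch_neg_natCast, poch_neg_natCast, poch_neg_natCast, hahnCoeff]
  have hac := Nat.factorial_mul_descFactorial (show j ≤ a + c - 1 by omega)
  have ha := Nat.factorial_mul_descFactorial (show j ≤ a by omega)
  have hsq : ((-1 : ℝ) ^ j) ^ 2 = 1 := by rw [← pow_mul, mul_comm, pow_mul, neg_one_sq, one_pow]
  have hdac : ((a + c - 1).descFactorial j : ℝ) ≠ 0 := by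
    exact_mod_cast (Nat.descFactorial_pos.mpr (by omega)).ne'
  have hda : (a.descFactorial j : ℝ) ≠ 0 := by
    exact_mod_cast (Nat.descFactorial_pos.mpr (by omega)).ne'
  rw [← hac, ← ha]
  push_cast
  field_simp
  linear_combination -((n.choose j : ℝ) * (2 * a + b + c - 1 - n).descFactorial j) * hsq

theorem psiFun_neg_one_add_two_mul {a n s : ℕ} (b c : ℕ) (hn : n < a) (hs : s ≤ a) :
    psiFun a b c n (-1 + 2 * s) = ∑ j ∈ range (n + 1),
      hahnCoeff (2 * a + b + c - 1) n j * (a + c - 1 - j)! / (a ! * (a + c - 1)!)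
        * intChoose (a - j) (s - j) := by
  rw [psiFun, if_pos ⟨s - 1, by ring⟩, show (-1 + 2 * (s : ℤ) + 1) / 2 = s by omega]
  refine sum_congr rfl fun j hj => ?_
  rw [mul_assoc, invfact_sub_mul_invfact_sub hs,
    ← psiCoeff_div_factorial b c hn (by simpa [Nat.lt_succ_iff] using hj)]
  ring

theorem psiFun_eq_zero {a n : ℕ} (b c : ℕ) {z : ℤ} (hz : ∀ s ≤ a, z ≠ -1 + 2 * s) :
    psiFun a b c n z = 0 := by
  rw [psiFun]
  split_ifs with hodd
  · obtain ⟨k, rfl⟩ := hodd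
    rw [show (2 * k + 1 + 1) / 2 = k + 1 by omega]
    refine sum_eq_zero fun j _ => ?_
    rcases lt_or_ge (k + 1) 0 with hk | hk
    · rw [invfact_of_neg (by omega : k + 1 - j < 0), mul_zero, zero_mul]
    · have hlt : (a : ℤ) - (k + 1) < 0 := by
        by_contra hge
        exact hz (k + 1).toNat (by omega) (by omega)
      rw [invfact_of_neg hlt, mul_zero]
  · rfl

theorem psiStarFun_sub_sub_one_add_two_mul {a m t : ℕ} (b c : ℕ) (hm : m < a) (ht : t ≤ a) :
    psiStarFun a b c m ((c : ℤ) - b - 1 + 2 * t) = ∑ i ∈ range (m + 1),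
      hahnCoeff (2 * a + b + c - 1) m i * (a + b - 1 - i)! / (a ! * (a + b - 1)!)
        * intChoose (a - i) (t - i) := by
  rw [psiStarFun, show (c : ℤ) - b - 1 + 2 * t - (c - b) = -1 + 2 * t by ring,
    psiFun_neg_one_add_two_mul c b hm ht, add_right_comm _ c b]

theorem psiStarFun_eq_zero {a m : ℕ} (b c : ℕ) {w : ℤ}
    (hw : ∀ t ≤ a, w ≠ (c : ℤ) - b - 1 + 2 * t) :
    psiStarFun a b c m w = 0 :=
  psiFun_eq_zero c b fun t ht => by have := hw t ht; omega

theorem tsum_eq_sum_range_of_eq_zero {f : ℤ → ℝ} (u : ℤ) (a : ℕ)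
    (hf : ∀ z, (∀ s ≤ a, z ≠ u + 2 * s) → f z = 0) :
    ∑' z, f z = ∑ s ∈ range (a + 1), f (u + 2 * s) := by
  rw [tsum_eq_sum (s := (range (a + 1)).image fun s : ℕ => u + 2 * s), sum_image]
  · intro s _ t _ h
    simpa using h
  · intro z hz
    refine hf z fun s hs h => hz ?_
    simp only [mem_image, mem_range]
    exact ⟨s, by omega, h.symm⟩

theorem sum_sum_sum_mul_mul_sum {R α β γ δ : Type*} [NonUnitalNonAssocSemiring R]
    (S : Finset α) (T : Finset β) (J : Finset γ) (I : Finset δ)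
    (f : γ → α → R) (W : α → β → R) (g : δ → β → R) :
    ∑ s ∈ S, ∑ t ∈ T, (∑ j ∈ J, f j s) * W s t * ∑ i ∈ I, g i t
      = ∑ j ∈ J, ∑ i ∈ I, ∑ s ∈ S, ∑ t ∈ T, f j s * W s t * g i t := by
  simp only [sum_mul, mul_sum]
  simp_rw [sum_comm (s := I) (t := J), sum_comm (s := T) (t := J)]
  rw [sum_comm (s := S) (t := J)]
  simp_rw [sum_comm (s := T) (t := I), sum_comm (s := S) (t := I)]

theorem gramA_apply_eq_sum_range (a b c : ℕ) (n m : Fin a) :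
    gramA a b c n m = ∑ s ∈ range (a + 1), ∑ t ∈ range (a + 1),
      psiFun a b c n (-1 + 2 * s) * walkConv (b + c - 2) (-1 + 2 * s) ((c : ℤ) - b - 1 + 2 * t)
        * psiStarFun a b c m ((c : ℤ) - b - 1 + 2 * t) := by
  have hrow : ∀ z : ℤ, (∀ s ≤ a, z ≠ -1 + 2 * s) →
      ∑' w, psiFun a b c n z * walkConv (b + c - 2) z w * psiStarFun a b c m w = 0 :=
    fun z hz => by simp [psiFun_eq_zero b c hz]
  have hcol : ∀ z w : ℤ, (∀ t ≤ a, w ≠ (c : ℤ) - b - 1 + 2 * t) →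
      psiFun a b c n z * walkConv (b + c - 2) z w * psiStarFun a b c m w = 0 :=
    fun z w hw => by rw [psiStarFun_eq_zero b c hw, mul_zero]
  rw [gramA, Matrix.of_apply, tsum_eq_sum_range_of_eq_zero (-1) a hrow]
  simp only [tsum_eq_sum_range_of_eq_zero ((c : ℤ) - b - 1) a (hcol _)]

theorem gramA_apply {a b c : ℕ} (hbc : 2 ≤ b + c) (n m : Fin a) :
    gramA a b c n m
      = hahnGram (2 * a + b + c - 1) n m / ((a ! : ℝ) ^ 2 * (a + b - 1)! * (a + c - 1)!) := by
  rw [gramA_apply_eq_sum_range, sum_congr rfl fun s hs => sum_congr rfl fun t ht => by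
    rw [psiFun_neg_one_add_two_mul b c n.isLt (by simpa [Nat.lt_succ_iff] using hs),
      psiStarFun_sub_sub_one_add_two_mul b c m.isLt (by simpa [Nat.lt_succ_iff] using ht),
      walkConv_neg_one_add_two_mul hbc], sum_sum_sum_mul_mul_sum, hahnGram, sum_div]
  refine sum_congr rfl fun j hj => ?_
  rw [sum_div]
  refine sum_congr rfl fun i hi => ?_
  have hj : j < a := by simp at hj; omega
  have hi : i < a := by simp at hi; omega
  have hconv :=
    sum_sum_intChoose_mul_intChoose_mul_intChoose (b + c - 2) ((c : ℤ) - 1) hi.le hj.le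
  rw [show b + c - 2 + (a - i) + (a - j) = 2 * a + b + c - 1 - 1 - i - j by omega,
    show (c : ℤ) - 1 + a - j = ((a + c - 1 - j : ℕ) : ℤ) by omega, intChoose_natCast] at hconv
  have hfact := Nat.choose_mul_factorial_mul_factorial
    (show a + c - 1 - j ≤ 2 * a + b + c - 1 - 1 - i - j by omega)
  rw [show 2 * a + b + c - 1 - 1 - i - j - (a + c - 1 - j) = a + b - 1 - i by omega] at hfact
  rw [← hfact, Nat.cast_mul, Nat.cast_mul, ← hconv]
  simp only [mul_sum, sum_mul, sum_div]
  refine sum_congr rfl fun s _ => sum_congr rfl fun t _ => ?_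
  field_simp

theorem gram_matrix_entries_and_det_general (a b c : ℕ) (hb : 0 < b) (hbc : b ≤ c) :
    (∀ n : Fin a, gramA a b c n n = (hahnC a b c n)⁻¹) ∧
      (gramA a b c).det
        = ∏ n ∈ Finset.range a,
            ((Nat.factorial n : ℝ) * (Nat.factorial (2 * a + b + c - n - 1) : ℝ)) /
              ((Nat.factorial (a + b - 1) : ℝ) * (Nat.factorial (a + c - 1) : ℝ) *
                ((2 * a + b + c - 2 * n - 1 : ℕ) : ℝ) * ((Nat.factorial a : ℝ)) ^ 2) := by
  have hdiag : ∀ n : Fin a, gramA a b c n n = (hahnC a b c n)⁻¹ := fun n => by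
    rw [gramA_apply (by omega), hahnGram_self (by omega), hahnC, inv_div,
      show 2 * a + b + c - 1 - n = 2 * a + b + c - n - 1 by omega,
      show 2 * a + b + c - 1 - 2 * n = 2 * a + b + c - 2 * n - 1 by omega]
    field_simp
  have hdiagonal : gramA a b c = Matrix.diagonal fun n : Fin a => (hahnC a b c n)⁻¹ := by
    ext n m
    rcases eq_or_ne n m with rfl | hnm
    · rw [hdiag, Matrix.diagonal_apply_eq]
    · rw [Matrix.diagonal_apply_ne _ hnm, gramA_apply (by omega),
        hahnGram_eq_zero_of_ne (Fin.val_ne_of_ne hnm) (by omega), zero_div]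
  refine ⟨hdiag, ?_⟩
  rw [hdiagonal, Matrix.det_diagonal, Fin.prod_univ_eq_prod_range (fun n => (hahnC a b c n)⁻¹)]
  exact prod_congr rfl fun n _ => by rw [hahnC, inv_div]

/-- The diagonal Gram entries `A_{nn} = C_n(a,b,c)^{-1}` and the resulting
determinant formula for `det A`. -/
theorem gram_matrix_entries_and_det (a b c : ℕ) (ha : 0 < a) (hb : 0 < b) (hbc : b ≤ c) :
    (∀ n : Fin a, gramA a b c n n = (hahnC a b c n)⁻¹) ∧
      (gramA a b c).det
        = ∏ n ∈ Finset.range a,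
            ((Nat.factorial n : ℝ) * (Nat.factorial (2 * a + b + c - n - 1) : ℝ)) /
              ((Nat.factorial (a + b - 1) : ℝ) * (Nat.factorial (a + c - 1) : ℝ) *
                ((2 * a + b + c - 2 * n - 1 : ℕ) : ℝ) * ((Nat.factorial a : ℝ)) ^ 2) :=
  gram_matrix_entries_and_det_general a b c hb hbc
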